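/- Let X, Y be 4×4 matrices over a commutative ring containing 1/2 and 1/3. Then tr([X,Y]^5) lies in the subring generated by traces of products of X and Y of degree at most 9; in particular tr([X,Y]^5) = (5/6)·tr([X,Y]^2)·tr([X,Y]^3). -/
import Mathlib


open Matrix

private lemma key_traceless {R : Type*} [CommRing R] (z : Matrix (Fin 4) (Fin 4) R)
    (h : trace z = 0) : 6 * trace (z^5) = 5 * trace (z^2) * trace (z^3) := by
  have h' : z 3 3 = -(z 0 0 + z 1 1 + z 2 2) := by
    simp [trace, Fin.sum_univ_four, Matrix.diag] at h
    linear_combination h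
  simp only [pow_succ, pow_zero, one_mul, trace, Matrix.diag, Matrix.mul_apply,
    Fin.sum_univ_four, Finset.sum_mul, Finset.mul_sum]
  rw [h']
  ring

private lemma sq_comm_trace {R : Type*} [CommRing R] (X Y : Matrix (Fin 4) (Fin 4) R) :
    trace ((X*Y-Y*X)^2) = 2*(trace (X*Y*(X*Y)) - trace (X*Y*(Y*X))) := by
  have e : (X*Y-Y*X)^2 = X*Y*(X*Y) - X*Y*(Y*X) - Y*X*(X*Y) + Y*X*(Y*X) := by noncomm_ring
  rw [e]
  simp only [trace_sub, trace_add]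
  have h3 : trace (Y*X*(X*Y)) = trace (X*Y*(Y*X)) := by
    rw [trace_mul_comm]
  have h4 : trace (Y*X*(Y*X)) = trace (X*Y*(X*Y)) := by
    rw [show Y*X*(Y*X) = Y*(X*(Y*X)) by noncomm_ring, trace_mul_comm]
    congr 1; noncomm_ring
  linear_combination - h3 + h4

private lemma cube_comm_trace {R : Type*} [CommRing R] (X Y : Matrix (Fin 4) (Fin 4) R) :
    trace ((X*Y-Y*X)^3) = 3*(trace (X*Y*(Y*X)*(Y*X)) - trace (X*Y*(X*Y)*(Y*X))) := by
  have e : (X*Y-Y*X)^3 =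
      X*Y*(X*Y)*(X*Y) - X*Y*(X*Y)*(Y*X) - X*Y*(Y*X)*(X*Y) + X*Y*(Y*X)*(Y*X)
      - Y*X*(X*Y)*(X*Y) + Y*X*(X*Y)*(Y*X) + Y*X*(Y*X)*(X*Y) - Y*X*(Y*X)*(Y*X) := by
    noncomm_ring
  rw [e]
  simp only [trace_sub, trace_add]
  have h3 : trace (X*Y*(Y*X)*(X*Y)) = trace (X*Y*(X*Y)*(Y*X)) := by
    rw [trace_mul_comm]; congr 1; noncomm_ring
  have h5 : trace (Y*X*(X*Y)*(X*Y)) = trace (X*Y*(X*Y)*(Y*X)) := by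
    rw [trace_mul_comm, show (X*Y)*(Y*X*(X*Y)) = (X*Y*(Y*X))*(X*Y) by noncomm_ring,
      trace_mul_comm]
    congr 1; noncomm_ring
  have h6 : trace (Y*X*(X*Y)*(Y*X)) = trace (X*Y*(Y*X)*(Y*X)) := by
    rw [trace_mul_comm, show (Y*X)*(Y*X*(X*Y)) = (Y*X*(Y*X))*(X*Y) by noncomm_ring,
      trace_mul_comm]
    congr 1; noncomm_ring
  have h7 : trace (Y*X*(Y*X)*(X*Y)) = trace (X*Y*(Y*X)*(Y*X)) := by
    rw [trace_mul_comm]; congr 1; noncomm_ring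
  have h8 : trace (Y*X*(Y*X)*(Y*X)) = trace (X*Y*(X*Y)*(X*Y)) := by
    rw [show Y*X*(Y*X)*(Y*X) = Y*(X*(Y*X)*(Y*X)) by noncomm_ring, trace_mul_comm]
    congr 1; noncomm_ring
  linear_combination - h3 - h5 + h6 + h7 - h8

theorem stmt_2 {R : Type*} [CommRing R] [Invertible (2 : R)] [Invertible (3 : R)]
    (X Y : Matrix (Fin 4) (Fin 4) R) :
    trace ((X * Y - Y * X) ^ 5) ∈
      Subring.closure {r : R | ∃ l : List (Matrix (Fin 4) (Fin 4) R),
        l ≠ [] ∧ l.length ≤ 9 ∧ (∀ a ∈ l, a = X ∨ a = Y) ∧ r = trace l.prod} ∧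
    trace ((X * Y - Y * X) ^ 5) =
      (5 * ⅟(2 : R) * ⅟(3 : R)) * trace ((X * Y - Y * X) ^ 2) * trace ((X * Y - Y * X) ^ 3) := by
  have hz : trace (X * Y - Y * X) = 0 := by
    rw [trace_sub, trace_mul_comm]; ring
  have hkey := key_traceless (X * Y - Y * X) hz
  have h2 : (2:R) * ⅟(2:R) = 1 := mul_invOf_self 2
  have h3 : (3:R) * ⅟(3:R) = 1 := mul_invOf_self 3
  have h23 : ⅟(2:R) * ⅟(3:R) * 6 = 1 := by
    linear_combination (3*⅟(3:R))*h2 + h3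
  have heq : trace ((X * Y - Y * X) ^ 5) =
      (5 * ⅟(2 : R) * ⅟(3 : R)) * trace ((X * Y - Y * X) ^ 2) * trace ((X * Y - Y * X) ^ 3) := by
    linear_combination (⅟(2:R)*⅟(3:R)) * hkey - trace ((X*Y-Y*X)^5) * h23
  refine ⟨?_, heq⟩
  have heq5 : trace ((X * Y - Y * X) ^ 5) =
      5 * (trace (X*Y*(X*Y)) - trace (X*Y*(Y*X))) *
        (trace (X*Y*(Y*X)*(Y*X)) - trace (X*Y*(X*Y)*(Y*X))) := by
    rw [heq, sq_comm_trace, cube_comm_trace]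
    linear_combination (5 * (trace (X*Y*(X*Y)) - trace (X*Y*(Y*X))) *
        (trace (X*Y*(Y*X)*(Y*X)) - trace (X*Y*(X*Y)*(Y*X)))) * h23
  rw [heq5]
  have mem : ∀ (l : List (Matrix (Fin 4) (Fin 4) R)) (A : Matrix (Fin 4) (Fin 4) R),
      l ≠ [] → l.length ≤ 9 → (∀ a ∈ l, a = X ∨ a = Y) → l.prod = A →
      trace A ∈ Subring.closure {r : R | ∃ l : List (Matrix (Fin 4) (Fin 4) R),
        l ≠ [] ∧ l.length ≤ 9 ∧ (∀ a ∈ l, a = X ∨ a = Y) ∧ r = trace l.prod} := by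
    intro l A h1 h2 h3 h4
    exact Subring.subset_closure ⟨l, h1, h2, h3, by rw [h4]⟩
  refine mul_mem (mul_mem (natCast_mem _ 5) (sub_mem ?_ ?_)) (sub_mem ?_ ?_)
  · exact mem [X,Y,X,Y] _ (by simp) (by simp)
      (by intro a ha; simp at ha; tauto) (by simp [List.prod_cons]; noncomm_ring)
  · exact mem [X,Y,Y,X] _ (by simp) (by simp)
      (by intro a ha; simp at ha; tauto) (by simp [List.prod_cons]; noncomm_ring)
  · exact mem [X,Y,Y,X,Y,X] _ (by simp) (by simp)
      (by intro a ha; simp at ha; tauto) (by simp [List.prod_cons]; noncomm_ring)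
  · exact mem [X,Y,X,Y,Y,X] _ (by simp) (by simp)
      (by intro a ha; simp at ha; tauto) (by simp [List.prod_cons]; noncomm_ring)
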